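/- The general conformal algebra gc_N: for a free ℂ[∂]-module M of rank N, the set of conformal endomorphisms (sequences A_{(n)} ∈ End_ℂ(M), n ∈ ℤ₊, with A_{(n)}v = 0 for n ≫ 0 and A_{(n)}∂v = ∂A_{(n)}v + nA_{(n-1)}v), equipped with (∂A)_{(n)} = -nA_{(n-1)} and products defined by (A_{(m)}B)_{(n)} = Σ_{j=0}^m (-1)^{m+j} C(m,j) [A_{(j)}, B_{(m+n-j)}], satisfies the conformal algebra axioms (C0)-(C3). -/

import Mathlib

/-!
The map `xⁱ yᵏ ↦ [A_{(i)}, B_{(k)}]` extends linearly to `ℂ[x, y]`, and `(A_{(m)}B)_{(n)}` is its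
value on `(x - y)ᵐ yⁿ`. Under this dictionary, passing from `A` to `∂A` corresponds to `-∂ₓ`, and
the conformality condition `[A_{(n)}, ∂] = n A_{(n-1)}` says that `ad ∂` acts by `∂ₓ + ∂_y`, which
kills `x - y`; this gives closure under the products. The axioms become polynomial identities:
(C1) is `∂ₓ (x - y)ᵐ = m (x - y)ᵐ⁻¹`, (C2) is the binomial expansion of `yᵖ = ((y - x) + x)ᵖ`,
and (C3) is the binomial expansion of `x - z = (x - y) + (y - z)` combined with the Jacobi
identity for the three-variable pairing `xⁱ yʲ zᵏ ↦ [A_{(i)}, [B_{(j)}, C_{(k)}]]`.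
For (C0), locality of `A` and `B` makes `(A_{(m)}B)_{(n)} v` vanish once `m + n` is large;
a bound that works on the finitely many generators works everywhere, because the vectors killed
by all `(A_{(m)}B)_{(n)}` form a `∂`-stable submodule.
-/

open Finset

/- `M` is a `ℂ[∂]`-module: a ℂ-module together with the endomorphism `DM` by which `∂` acts.
A conformal endomorphism of `M` is a sequence `A n ∈ End_ℂ(M)`, `n ∈ ℤ₊`, with `A n v = 0`
for `n ≫ 0` and `A n (∂v) = ∂(A n v) + n A (n-1) v`. -/

variable {M : Type*} [AddCommGroup M] [Module ℂ M]

/-- Conformal endomorphisms of the `ℂ[∂]`-module `(M, DM)`. -/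
def IsConfEnd (DM : Module.End ℂ M) (A : ℕ → Module.End ℂ M) : Prop :=
  (∀ v : M, ∃ K : ℕ, ∀ n ≥ K, A n v = 0) ∧
  ∀ (n : ℕ) (v : M), A n (DM v) = DM (A n v) + (n : ℂ) • A (n - 1) v

/-- The `m`-th product of conformal endomorphisms:
`(A_{(m)}B)_{(n)} = ∑_{j=0}^m (-1)^{m+j} C(m,j) [A_{(j)}, B_{(m+n-j)}]`. -/
noncomputable def cmul (A B : ℕ → Module.End ℂ M) (m : ℕ) : ℕ → Module.End ℂ M :=
  fun n => ∑ j ∈ range (m + 1), ((-1 : ℂ) ^ (m + j) * (m.choose j : ℂ)) •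
    (A j * B (m + n - j) - B (m + n - j) * A j)

/-- The `ℂ[∂]`-module structure on conformal endomorphisms: `(∂A)_{(n)} = -n A_{(n-1)}`. -/
noncomputable def cD (A : ℕ → Module.End ℂ M) : ℕ → Module.End ℂ M :=
  fun n => -(n : ℂ) • A (n - 1)

attribute [local instance] LieRing.ofAssociativeRing

open Filter

namespace MvPolynomial

section Pairing

variable {R σ V : Type*} [CommSemiring R] [AddCommMonoid V] [Module R V]

noncomputable def monomialPairing : ((σ →₀ ℕ) → V) ≃ₗ[R] MvPolynomial σ R →ₗ[R] V :=
  (basisMonomials σ R).constr R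

@[simp]
theorem monomialPairing_monomial (T : (σ →₀ ℕ) → V) (s : σ →₀ ℕ) (c : R) :
    monomialPairing T (monomial s c) = c • T s := by
  have h : monomial s c = c • basisMonomials σ R s := by simp [smul_monomial]
  rw [monomialPairing, h, map_smul, Module.Basis.constr_basis]

theorem monomialPairing_pderiv (T : (σ →₀ ℕ) → V) (i : σ) (P : MvPolynomial σ R) :
    monomialPairing T (pderiv i P)
      = monomialPairing (fun s => (s i : R) • T (s - Finsupp.single i 1)) P := by
  induction P using induction_on' with
  | monomial s c => simp [mul_smul]
  | add P Q hP hQ => simp [hP, hQ]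

theorem monomialPairing_X_pow_mul_X_pow {i j : σ} (hij : i ≠ j) (F : ℕ → ℕ → V) (a b : ℕ) :
    monomialPairing (R := R) (fun s => F (s i) (s j)) (X i ^ a * X j ^ b) = F a b := by
  simp [X_pow_eq_monomial, monomial_mul, hij, hij.symm]

theorem monomialPairing_X_pow_mul_X_pow_mul_X_pow {i j k : σ} (hij : i ≠ j) (hik : i ≠ k)
    (hjk : j ≠ k) (F : ℕ → ℕ → ℕ → V) (a b c : ℕ) :
    monomialPairing (R := R) (fun s => F (s i) (s j) (s k)) (X i ^ a * X j ^ b * X k ^ c)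
      = F a b c := by
  simp [X_pow_eq_monomial, monomial_mul, hij, hij.symm, hik, hik.symm, hjk, hjk.symm]

end Pairing

theorem monomialPairing_lie {R σ L : Type*} [CommRing R] [LieRing L] [LieAlgebra R L]
    (T : (σ →₀ ℕ) → L) (P : MvPolynomial σ R) (D : L) :
    ⁅monomialPairing T P, D⁆ = monomialPairing (fun s => ⁅T s, D⁆) P := by
  induction P using induction_on' with
  | monomial s c => simp [smul_lie]
  | add P Q hP hQ => simp [add_lie, hP, hQ]

section Derivatives

variable {R σ : Type*} [CommRing R] {i j : σ}

theorem pderiv_sub_X_pow_mul_X_pow (hij : i ≠ j) (m n : ℕ) :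
    pderiv i ((X i - X j) ^ m * X j ^ n : MvPolynomial σ R)
      = m • ((X i - X j) ^ (m - 1) * X j ^ n) := by
  simp [Derivation.leibniz, Derivation.leibniz_pow, hij.symm]
  ring

theorem pderiv_add_pderiv_sub_X_pow_mul_X_pow (hij : i ≠ j) (m n : ℕ) :
    pderiv i ((X i - X j) ^ m * X j ^ n : MvPolynomial σ R) + pderiv j ((X i - X j) ^ m * X j ^ n)
      = n • ((X i - X j) ^ m * X j ^ (n - 1)) := by
  simp [Derivation.leibniz, Derivation.leibniz_pow, hij, hij.symm]
  ring

end Derivatives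

end MvPolynomial

section Binomial

variable {R S : Type*} [CommRing R] [CommRing S] [Algebra R S]

theorem sub_pow_eq_sum_smul (x y : S) (m : ℕ) :
    (x - y) ^ m
      = ∑ u ∈ range (m + 1), ((-1) ^ (m + u) * (m.choose u : R)) • (x ^ u * y ^ (m - u)) := by
  rw [sub_pow]
  refine Finset.sum_congr rfl fun u _ => ?_
  rw [Algebra.smul_def]
  simp only [map_mul, map_pow, map_neg, map_one, map_natCast]
  ring

theorem sub_pow_mul_pow_eq_sum_smul (x y : S) (n p : ℕ) :
    (x - y) ^ n * y ^ p
      = ∑ j ∈ range (p + 1), ((-1) ^ n * (p.choose j : R)) • ((y - x) ^ (n + j) * x ^ (p - j)) := by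
  calc (x - y) ^ n * y ^ p = (-1) ^ n * (y - x) ^ n * ((y - x) + x) ^ p := by
        rw [sub_add_cancel, ← neg_sub y x, neg_pow]
    _ = _ := by
        rw [add_pow, Finset.mul_sum]
        refine Finset.sum_congr rfl fun j _ => ?_
        rw [Algebra.smul_def]
        simp only [map_mul, map_pow, map_neg, map_one, map_natCast]
        ring

end Binomial

theorem Finset.sum_range_eq_sum_range_of_eq_zero {V : Type*} [AddCommMonoid V] {f : ℕ → V}
    {a b : ℕ} (ha : ∀ j ≥ a, f j = 0) (hb : ∀ j ≥ b, f j = 0) :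
    ∑ j ∈ range a, f j = ∑ j ∈ range b, f j := by
  wlog hab : a ≤ b generalizing a b
  · exact (this hb ha (le_of_not_ge hab)).symm
  exact Finset.sum_subset (Finset.range_subset_range.2 hab) fun j _ hj => ha j (by simpa using hj)

open MvPolynomial

theorem isConfEnd_iff (DM : Module.End ℂ M) (A : ℕ → Module.End ℂ M) :
    IsConfEnd DM A ↔ (∀ v, ∀ᶠ n in atTop, A n v = 0) ∧ ∀ n, ⁅A n, DM⁆ = -cD A n := by
  simp only [IsConfEnd, eventually_atTop, LinearMap.ext_iff, Ring.lie_def, cD, neg_smul,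
    neg_neg, sub_eq_iff_eq_add', LinearMap.add_apply, Module.End.mul_apply, LinearMap.smul_apply]

theorem cmul_eq_sum_lie (A B : ℕ → Module.End ℂ M) (m n : ℕ) :
    cmul A B m n
      = ∑ j ∈ range (m + 1), ((-1 : ℂ) ^ (m + j) * (m.choose j : ℂ)) • ⁅A j, B (m + n - j)⁆ :=
  rfl

section TwoVariables

variable {σ : Type*} {i j : σ}

theorem cmul_eq_monomialPairing (hij : i ≠ j) (A B : ℕ → Module.End ℂ M) (m n : ℕ) :
    cmul A B m n
      = monomialPairing (R := ℂ) (fun s => ⁅A (s i), B (s j)⁆) ((X i - X j) ^ m * X j ^ n) := by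
  rw [sub_pow_eq_sum_smul (R := ℂ), Finset.sum_mul, map_sum, cmul_eq_sum_lie]
  refine Finset.sum_congr rfl fun k hk => ?_
  have hkm : k ≤ m := Nat.lt_succ_iff.mp (Finset.mem_range.mp hk)
  rw [smul_mul_assoc, mul_assoc, ← pow_add, map_smul,
    monomialPairing_X_pow_mul_X_pow hij (fun a b => ⁅A a, B b⁆),
    show m - k + n = m + n - k by omega]

theorem monomialPairing_cD_left (hij : i ≠ j) (A B : ℕ → Module.End ℂ M)
    (P : MvPolynomial σ ℂ) :
    monomialPairing (fun s => ⁅cD A (s i), B (s j)⁆) P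
      = -monomialPairing (fun s => ⁅A (s i), B (s j)⁆) (pderiv i P) := by
  rw [monomialPairing_pderiv, ← LinearMap.neg_apply, ← map_neg]
  congr 2
  funext s
  simp [cD, hij, smul_lie]

theorem monomialPairing_cD_right (hij : i ≠ j) (A B : ℕ → Module.End ℂ M)
    (P : MvPolynomial σ ℂ) :
    monomialPairing (fun s => ⁅A (s i), cD B (s j)⁆) P
      = -monomialPairing (fun s => ⁅A (s i), B (s j)⁆) (pderiv j P) := by
  rw [monomialPairing_pderiv, ← LinearMap.neg_apply, ← map_neg]
  congr 2
  funext s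
  simp [cD, hij.symm, lie_smul]

end TwoVariables

theorem cmul_cD_left (A B : ℕ → Module.End ℂ M) (m n : ℕ) :
    cmul (cD A) B m n = -(m : ℂ) • cmul A B (m - 1) n := by
  have h01 : (0 : Fin 2) ≠ 1 := Fin.zero_ne_one
  rw [cmul_eq_monomialPairing h01, monomialPairing_cD_left h01, pderiv_sub_X_pow_mul_X_pow h01,
    map_nsmul, ← cmul_eq_monomialPairing h01, neg_smul, Nat.cast_smul_eq_nsmul]

theorem lie_cmul_eq_neg_cD {DM : Module.End ℂ M} {A B : ℕ → Module.End ℂ M}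
    (hA : ∀ n, ⁅A n, DM⁆ = -cD A n) (hB : ∀ n, ⁅B n, DM⁆ = -cD B n) (m n : ℕ) :
    ⁅cmul A B m n, DM⁆ = -cD (cmul A B m) n := by
  have h01 : (0 : Fin 2) ≠ 1 := Fin.zero_ne_one
  have hlie : (fun s : Fin 2 →₀ ℕ => ⁅⁅A (s 0), B (s 1)⁆, DM⁆)
      = -((fun s => ⁅cD A (s 0), B (s 1)⁆) + fun s => ⁅A (s 0), cD B (s 1)⁆) := by
    funext s
    simp only [lie_lie, hA, hB, lie_neg, Pi.neg_apply, Pi.add_apply]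
    rw [← lie_skew (B (s 1))]
    abel
  rw [cmul_eq_monomialPairing h01, monomialPairing_lie, hlie, map_neg, map_add,
    LinearMap.neg_apply, LinearMap.add_apply, monomialPairing_cD_left h01,
    monomialPairing_cD_right h01, ← neg_add, neg_neg, ← map_add,
    pderiv_add_pderiv_sub_X_pow_mul_X_pow h01, map_nsmul, ← cmul_eq_monomialPairing h01, cD,
    neg_smul, neg_neg, Nat.cast_smul_eq_nsmul]

theorem cmul_swap_eq_neg_monomialPairing (A B : ℕ → Module.End ℂ M) (m n : ℕ) :
    cmul B A m n = -monomialPairing (R := ℂ) (fun s : Fin 2 →₀ ℕ => ⁅A (s 0), B (s 1)⁆)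
      ((X 1 - X 0) ^ m * X 0 ^ n) := by
  rw [cmul_eq_monomialPairing Fin.zero_ne_one.symm, ← LinearMap.neg_apply, ← map_neg]
  congr 2
  funext s
  exact (lie_skew _ _).symm

theorem cD_iterate_apply (X : ℕ → Module.End ℂ M) (j p : ℕ) :
    (cD^[j] X) p = ((-1) ^ j * (p.descFactorial j : ℂ)) • X (p - j) := by
  induction j generalizing X with
  | zero => simp
  | succ j ih =>
    rw [Function.iterate_succ_apply, ih, cD, smul_smul, Nat.descFactorial_succ, Nat.sub_sub]
    congr 1
    push_cast
    ring

theorem cmul_eq_sum_cD_iterate (A B : ℕ → Module.End ℂ M) (n K : ℕ)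
    (h : ∀ j ≥ K, cmul B A (n + j) = 0) :
    cmul A B n = fun p => ∑ j ∈ range K,
      (((-1 : ℂ) ^ (j + n + 1) * ((j.factorial : ℂ))⁻¹)) • (cD^[j] (cmul B A (n + j))) p := by
  funext p
  have hterm (j : ℕ) :
      ((-1 : ℂ) ^ (j + n + 1) * ((j.factorial : ℂ))⁻¹) • (cD^[j] (cmul B A (n + j))) p
        = monomialPairing (R := ℂ) (fun s : Fin 2 →₀ ℕ => ⁅A (s 0), B (s 1)⁆)
            (((-1) ^ n * (p.choose j : ℂ)) • ((X 1 - X 0) ^ (n + j) * X 0 ^ (p - j))) := by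
    have hsign : (-1 : ℂ) ^ (j + n + 1) * (-1) ^ j = -(-1) ^ n := by
      rw [← pow_add, show j + n + 1 + j = n + 1 + 2 * j by ring, pow_add, pow_mul, pow_succ]
      norm_num
    have hfac : (j.factorial : ℂ) ≠ 0 := Nat.cast_ne_zero.2 j.factorial_ne_zero
    rw [cD_iterate_apply, smul_smul, cmul_swap_eq_neg_monomialPairing, smul_neg, ← neg_smul,
      map_smul, Nat.descFactorial_eq_factorial_mul_choose, Nat.cast_mul]
    congr 1
    rw [neg_eq_iff_eq_neg]
    calc _ = ((-1) ^ (j + n + 1) * (-1) ^ j) * ((j.factorial : ℂ)⁻¹ * j.factorial)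
          * (p.choose j : ℂ) := by ring
      _ = _ := by rw [hsign, inv_mul_cancel₀ hfac]; ring
  rw [Finset.sum_range_eq_sum_range_of_eq_zero (b := p + 1)
      (fun j hj => by rw [cD_iterate_apply, h j hj]; simp)
      (fun j hj => by rw [cD_iterate_apply, Nat.descFactorial_eq_zero_iff_lt.2 (by omega)]; simp),
    Finset.sum_congr rfl fun j _ => hterm j, ← map_sum, ← sub_pow_mul_pow_eq_sum_smul]
  exact cmul_eq_monomialPairing Fin.zero_ne_one A B n p

section ThreeVariables

variable {σ : Type*} {i j k : σ}

theorem monomialPairing_eq_cmul_cmul_right (hij : i ≠ j) (hik : i ≠ k) (hjk : j ≠ k)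
    (A B C : ℕ → Module.End ℂ M) (m n p : ℕ) :
    monomialPairing (fun s => ⁅A (s i), ⁅B (s j), C (s k)⁆⁆)
        ((X i - X k) ^ m * (X j - X k) ^ n * X k ^ p : MvPolynomial σ ℂ)
      = cmul A (cmul B C n) m p := by
  rw [sub_pow_eq_sum_smul (R := ℂ) (X i), sub_pow_eq_sum_smul (R := ℂ) (X j), Finset.sum_mul,
    Finset.sum_mul, map_sum, cmul_eq_sum_lie]
  refine Finset.sum_congr rfl fun u hu => ?_
  have hum : u ≤ m := Nat.lt_succ_iff.mp (Finset.mem_range.mp hu)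
  rw [Finset.mul_sum, Finset.sum_mul, map_sum, cmul_eq_sum_lie, lie_sum, Finset.smul_sum]
  refine Finset.sum_congr rfl fun v hv => ?_
  have hvn : v ≤ n := Nat.lt_succ_iff.mp (Finset.mem_range.mp hv)
  rw [smul_mul_smul_comm, smul_mul_assoc, map_smul, lie_smul, smul_smul,
    show X i ^ u * X k ^ (m - u) * (X j ^ v * X k ^ (n - v)) * X k ^ p
      = X i ^ u * X j ^ v * X k ^ (n + (m + p - u) - v) by
        rw [show n + (m + p - u) - v = (m - u) + (n - v) + p by omega]; ring,
    monomialPairing_X_pow_mul_X_pow_mul_X_pow hij hik hjk (fun a b c => ⁅A a, ⁅B b, C c⁆⁆)]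

theorem monomialPairing_eq_cmul_cmul_left (hij : i ≠ j) (hik : i ≠ k) (hjk : j ≠ k)
    (A B C : ℕ → Module.End ℂ M) (a b p : ℕ) :
    monomialPairing (fun s => ⁅⁅A (s i), B (s j)⁆, C (s k)⁆)
        ((X i - X j) ^ a * (X j - X k) ^ b * X k ^ p : MvPolynomial σ ℂ)
      = cmul (cmul A B a) C b p := by
  rw [sub_pow_eq_sum_smul (R := ℂ) (X j) (X k), Finset.mul_sum, Finset.sum_mul, map_sum,
    cmul_eq_sum_lie]
  refine Finset.sum_congr rfl fun v hv => ?_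
  have hvb : v ≤ b := Nat.lt_succ_iff.mp (Finset.mem_range.mp hv)
  rw [sub_pow_eq_sum_smul (R := ℂ) (X i), Finset.sum_mul, Finset.sum_mul, map_sum,
    cmul_eq_sum_lie, sum_lie, Finset.smul_sum]
  refine Finset.sum_congr rfl fun u hu => ?_
  have hua : u ≤ a := Nat.lt_succ_iff.mp (Finset.mem_range.mp hu)
  rw [smul_mul_smul_comm, smul_mul_assoc, map_smul, smul_lie, smul_smul, mul_comm,
    show X i ^ u * X j ^ (a - u) * (X j ^ v * X k ^ (b - v)) * X k ^ p
      = X i ^ u * X j ^ (a + v - u) * X k ^ (b + p - v) by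
        rw [show a + v - u = (a - u) + v by omega, show b + p - v = (b - v) + p by omega]; ring,
    monomialPairing_X_pow_mul_X_pow_mul_X_pow hij hik hjk (fun a b c => ⁅⁅A a, B b⁆, C c⁆)]

end ThreeVariables

theorem cmul_jacobi (A B C : ℕ → Module.End ℂ M) (m n : ℕ) :
    cmul A (cmul B C n) m = fun p => (∑ j ∈ range (m + 1), (m.choose j : ℂ) •
      cmul (cmul A B j) C (m + n - j) p) + cmul B (cmul A C m) n p := by
  funext p
  have h01 : (0 : Fin 3) ≠ 1 := by decide
  have h02 : (0 : Fin 3) ≠ 2 := by decide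
  have h12 : (1 : Fin 3) ≠ 2 := by decide
  set P : MvPolynomial (Fin 3) ℂ := (X 0 - X 2) ^ m * (X 1 - X 2) ^ n * X 2 ^ p with hP
  have hright : cmul A (cmul B C n) m p
      = monomialPairing (fun s => ⁅A (s 0), ⁅B (s 1), C (s 2)⁆⁆) P :=
    (monomialPairing_eq_cmul_cmul_right h01 h02 h12 A B C m n p).symm
  have hmid : cmul B (cmul A C m) n p
      = monomialPairing (fun s => ⁅B (s 1), ⁅A (s 0), C (s 2)⁆⁆) P := by
    rw [← monomialPairing_eq_cmul_cmul_right h01.symm h12 h02 B A C n m p, hP]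
    congr 1
    ring
  have hleft : ∑ j ∈ range (m + 1), (m.choose j : ℂ) • cmul (cmul A B j) C (m + n - j) p
      = monomialPairing (fun s => ⁅⁅A (s 0), B (s 1)⁆, C (s 2)⁆) P := by
    have hexpand : P = ∑ j ∈ range (m + 1), (m.choose j : ℂ) •
        ((X 0 - X 1) ^ j * (X 1 - X 2) ^ (m + n - j) * X 2 ^ p) := by
      rw [hP, show (X 0 - X 2 : MvPolynomial (Fin 3) ℂ) = (X 0 - X 1) + (X 1 - X 2) by ring,
        add_pow, Finset.sum_mul, Finset.sum_mul]
      refine Finset.sum_congr rfl fun j hj => ?_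
      have hjm : j ≤ m := Nat.lt_succ_iff.mp (Finset.mem_range.mp hj)
      rw [show m + n - j = (m - j) + n by omega, Algebra.smul_def, map_natCast]
      ring
    rw [hexpand, map_sum]
    refine Finset.sum_congr rfl fun j _ => ?_
    rw [map_smul, monomialPairing_eq_cmul_cmul_left h01 h02 h12]
  have hjacobi : (fun s : Fin 3 →₀ ℕ => ⁅A (s 0), ⁅B (s 1), C (s 2)⁆⁆)
      = (fun s => ⁅⁅A (s 0), B (s 1)⁆, C (s 2)⁆) + fun s => ⁅B (s 1), ⁅A (s 0), C (s 2)⁆⁆ := by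
    funext s
    exact leibniz_lie _ _ _
  rw [hright, hmid, hleft, hjacobi, map_add, LinearMap.add_apply]

theorem eventually_lie_apply_eq_zero {A B : ℕ → Module.End ℂ M}
    (hA : ∀ v, ∀ᶠ n in atTop, A n v = 0) (hB : ∀ v, ∀ᶠ n in atTop, B n v = 0) (v : M) :
    ∀ᶠ j in atTop, ∀ k, ⁅A j, B k⁆ v = 0 := by
  obtain ⟨K, hK⟩ := eventually_atTop.1 (hB v)
  filter_upwards [hA v, (eventually_all_finset (range K)).2 fun k _ => hA (B k v)]
    with j hj hjB k
  rw [Ring.lie_def, LinearMap.sub_apply, Module.End.mul_apply, Module.End.mul_apply, hj,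
    map_zero, sub_zero]
  by_cases hk : k < K
  · exact hjB k (Finset.mem_range.2 hk)
  · rw [hK k (not_lt.1 hk), map_zero]

theorem exists_cmul_apply_eq_zero {A B : ℕ → Module.End ℂ M}
    (hA : ∀ v, ∀ᶠ n in atTop, A n v = 0) (hB : ∀ v, ∀ᶠ n in atTop, B n v = 0) (v : M) :
    ∃ K, ∀ m n, K ≤ m + n → cmul A B m n v = 0 := by
  obtain ⟨P, hP⟩ := eventually_atTop.1 (eventually_lie_apply_eq_zero hA hB v)
  obtain ⟨Q, hQ⟩ := eventually_atTop.1 (eventually_lie_apply_eq_zero hB hA v)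
  refine ⟨P + Q, fun m n hmn => ?_⟩
  rw [cmul_eq_sum_lie, LinearMap.sum_apply]
  refine Finset.sum_eq_zero fun j _ => ?_
  rw [LinearMap.smul_apply]
  by_cases hj : P ≤ j
  · rw [hP j hj, smul_zero]
  · rw [← lie_skew, LinearMap.neg_apply, hQ _ (by omega), neg_zero, smul_zero]

theorem eq_zero_of_apply_generator_eq_zero {N : ℕ} {DM : Module.End ℂ M} {bv : Fin N → M}
    (hspan : ∀ v : M, v ∈ Submodule.span ℂ {x | ∃ (i : Fin N) (k : ℕ), x = (⇑DM)^[k] (bv i)})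
    {X : ℕ → Module.End ℂ M} (hX : ∀ n, ⁅X n, DM⁆ = -cD X n) (h : ∀ i n, X n (bv i) = 0) :
    X = 0 := by
  let S : Submodule ℂ M := ⨅ n, LinearMap.ker (X n)
  have hS : ∀ v ∈ S, DM v ∈ S := by
    intro v hv
    simp only [S, Submodule.mem_iInf, LinearMap.mem_ker] at hv ⊢
    intro n
    simpa [Ring.lie_def, cD, hv] using LinearMap.congr_fun (hX n) v
  have hgen (i : Fin N) (k : ℕ) : (⇑DM)^[k] (bv i) ∈ S := by
    induction k with
    | zero => simpa [S] using h i
    | succ k ih => rw [Function.iterate_succ_apply']; exact hS _ ih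
  have hmem (v : M) : v ∈ S :=
    Submodule.span_le.2 (by rintro _ ⟨i, k, rfl⟩; exact hgen i k) (hspan v)
  funext n
  ext v
  exact (Submodule.mem_iInf _).1 (hmem v) n

theorem IsConfEnd.cD {DM : Module.End ℂ M} {A : ℕ → Module.End ℂ M} (hA : IsConfEnd DM A) :
    IsConfEnd DM (cD A) := by
  rw [isConfEnd_iff] at hA ⊢
  refine ⟨fun v => ?_, fun n => ?_⟩
  · filter_upwards [(tendsto_sub_atTop_nat 1).eventually (hA.1 v)] with n hn
    simp [_root_.cD, hn]
  · simp [_root_.cD, smul_lie, hA.2]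

theorem IsConfEnd.cmul {DM : Module.End ℂ M} {A B : ℕ → Module.End ℂ M} (hA : IsConfEnd DM A)
    (hB : IsConfEnd DM B) (m : ℕ) : IsConfEnd DM (cmul A B m) := by
  rw [isConfEnd_iff] at hA hB ⊢
  refine ⟨fun v => ?_, lie_cmul_eq_neg_cD hA.2 hB.2 m⟩
  obtain ⟨K, hK⟩ := exists_cmul_apply_eq_zero hA.1 hB.1 v
  exact eventually_atTop.2 ⟨K, fun n hn => hK m n (by omega)⟩

theorem exists_cmul_eq_zero {N : ℕ} {DM : Module.End ℂ M} {bv : Fin N → M}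
    (hspan : ∀ v : M, v ∈ Submodule.span ℂ {x | ∃ (i : Fin N) (k : ℕ), x = (⇑DM)^[k] (bv i)})
    {A B : ℕ → Module.End ℂ M} (hA : IsConfEnd DM A) (hB : IsConfEnd DM B) :
    ∃ K, ∀ m ≥ K, cmul A B m = 0 := by
  choose K hK using fun i =>
    exists_cmul_apply_eq_zero ((isConfEnd_iff _ _).1 hA).1 ((isConfEnd_iff _ _).1 hB).1 (bv i)
  refine ⟨Finset.univ.sup K, fun m hm => eq_zero_of_apply_generator_eq_zero hspan
    ((isConfEnd_iff _ _).1 (hA.cmul hB m)).2 fun i n => hK i m n ?_⟩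
  exact ((Finset.le_sup (Finset.mem_univ i)).trans hm).trans (Nat.le_add_right m n)

theorem gcN_is_conformal_algebra_general (N : ℕ) (DM : Module.End ℂ M)
    (bv : Fin N → M)
    (hspan : ∀ v : M, v ∈ Submodule.span ℂ {x | ∃ (i : Fin N) (k : ℕ), x = (⇑DM)^[k] (bv i)}) :
    -- closure under `∂` and the products
    (∀ A, IsConfEnd DM A → IsConfEnd DM (cD A)) ∧
    (∀ A B, IsConfEnd DM A → IsConfEnd DM B → ∀ m : ℕ, IsConfEnd DM (cmul A B m)) ∧
    -- (C0)
    (∀ A B, IsConfEnd DM A → IsConfEnd DM B → ∃ K : ℕ, ∀ m ≥ K, cmul A B m = 0) ∧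
    -- (C1)
    (∀ A B, IsConfEnd DM A → IsConfEnd DM B → ∀ m : ℕ,
      cmul (cD A) B m = fun n => -(m : ℂ) • cmul A B (m - 1) n) ∧
    -- (C2)
    (∀ A B, IsConfEnd DM A → IsConfEnd DM B → ∀ (n K : ℕ),
      (∀ j ≥ K, cmul B A (n + j) = 0) →
      cmul A B n = fun p => ∑ j ∈ range K,
        (((-1 : ℂ) ^ (j + n + 1) * ((j.factorial : ℂ))⁻¹)) • (cD^[j] (cmul B A (n + j))) p) ∧
    -- (C3)
    (∀ A B C, IsConfEnd DM A → IsConfEnd DM B → IsConfEnd DM C → ∀ m n : ℕ,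
      cmul A (cmul B C n) m = fun p => (∑ j ∈ range (m + 1), (m.choose j : ℂ) •
        cmul (cmul A B j) C (m + n - j) p) + cmul B (cmul A C m) n p) :=
  ⟨fun _ hA => hA.cD,
    fun _ _ hA hB m => hA.cmul hB m,
    fun _ _ hA hB => exists_cmul_eq_zero hspan hA hB,
    fun A B _ _ m => funext (cmul_cD_left A B m),
    fun A B _ _ n K h => cmul_eq_sum_cD_iterate A B n K h,
    fun A B C _ _ _ m n => cmul_jacobi A B C m n⟩

/-- The general conformal algebra `gc_N`: for a free `ℂ[∂]`-module `M` of rank `N`, the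
conformal endomorphisms of `M`, equipped with `cD` and the products `cmul`, are closed under
these operations and satisfy the conformal algebra axioms (C0)-(C3). -/
theorem gcN_is_conformal_algebra (N : ℕ) (DM : Module.End ℂ M)
    (bv : Fin N → M)
    (hspan : ∀ v : M, v ∈ Submodule.span ℂ {x | ∃ (i : Fin N) (k : ℕ), x = (⇑DM)^[k] (bv i)})
    (hfree : ∀ c : Fin N → Polynomial ℂ,
      (∑ i, Polynomial.aeval DM (c i) (bv i)) = 0 → ∀ i, c i = 0) :
    -- closure under `∂` and the products
    (∀ A, IsConfEnd DM A → IsConfEnd DM (cD A)) ∧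
    (∀ A B, IsConfEnd DM A → IsConfEnd DM B → ∀ m : ℕ, IsConfEnd DM (cmul A B m)) ∧
    -- (C0)
    (∀ A B, IsConfEnd DM A → IsConfEnd DM B → ∃ K : ℕ, ∀ m ≥ K, cmul A B m = 0) ∧
    -- (C1)
    (∀ A B, IsConfEnd DM A → IsConfEnd DM B → ∀ m : ℕ,
      cmul (cD A) B m = fun n => -(m : ℂ) • cmul A B (m - 1) n) ∧
    -- (C2)
    (∀ A B, IsConfEnd DM A → IsConfEnd DM B → ∀ (n K : ℕ),
      (∀ j ≥ K, cmul B A (n + j) = 0) →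
      cmul A B n = fun p => ∑ j ∈ range K,
        (((-1 : ℂ) ^ (j + n + 1) * ((j.factorial : ℂ))⁻¹)) • (cD^[j] (cmul B A (n + j))) p) ∧
    -- (C3)
    (∀ A B C, IsConfEnd DM A → IsConfEnd DM B → IsConfEnd DM C → ∀ m n : ℕ,
      cmul A (cmul B C n) m = fun p => (∑ j ∈ range (m + 1), (m.choose j : ℂ) •
        cmul (cmul A B j) C (m + n - j) p) + cmul B (cmul A C m) n p) :=
  gcN_is_conformal_algebra_general N DM bv hspan
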